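/- arXiv:2204.02537 — 4 statements merged into one kernel-verified Lean document; each statement's English description precedes it below -/
import Mathlib

section
/- Let H = (V,F,z) be a directed hypergraph, S ⊆ F a λ-coreset of H, and x ∈ ℝ^V with x^⊤L_H(x) = 1. For i ∈ ℤ, let F_i^x = {f ∈ F∖S : Q_H^x(f) ∈ [1/(2^i λ), 1/(2^{i−1} λ))} and let E_i^x be the set of pairs (u,v) that are x-critical pairs of some f ∈ F_i^x. Then |E_i^x| < 2^i. -/
open Finset Classical

/-
Each pair `(u,v)` that is critical for some `f ∈ F_i^x` owns `λ` coreset arcs, each at least as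
heavy as `f` and having `(u,v)` among its pairs, so each carries energy at least
`Q(f) ≥ 2^{-i}/λ`. These `λ |E_i^x|` arcs are disjoint from each other and from `F_i^x`, so
`|E_i^x| 2^{-i} < ∑_F Q = 1` as soon as `F_i^x` is nonempty.
-/

theorem Finset.card_mul_le_sum_biUnion {ι α : Type*} [DecidableEq α] {T : Finset ι}
    {P : ι → Finset α} (hP : (T : Set ι).PairwiseDisjoint P) {Q : α → ℝ} {lam : ℕ} {c : ℝ}
    (hcard : ∀ p ∈ T, #(P p) = lam) (hQ : ∀ p ∈ T, ∀ g ∈ P p, c ≤ Q g) :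
    #T * (lam * c) ≤ ∑ g ∈ T.biUnion P, Q g := by
  rw [sum_biUnion hP, ← nsmul_eq_mul, ← sum_const]
  refine sum_le_sum fun p hp => ?_
  simpa only [hcard p hp, nsmul_eq_mul] using card_nsmul_le_sum (P p) Q c (hQ p hp)

theorem Finset.sum_add_sum_le_of_disjoint {α : Type*} [DecidableEq α] {F A B : Finset α}
    {Q : α → ℝ} (hQ : ∀ f ∈ F, 0 ≤ Q f) (hA : A ⊆ F) (hB : B ⊆ F) (hAB : Disjoint A B) :
    ∑ f ∈ A, Q f + ∑ f ∈ B, Q f ≤ ∑ f ∈ F, Q f := by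
  rw [← sum_union hAB]
  exact sum_le_sum_of_subset_of_nonneg (union_subset hA hB) fun f hf _ => hQ f hf

theorem mul_sq_critical_le_of_heavier {V α : Type*} {t h : α → Finset V} {z : α → ℝ}
    {x : V → ℝ} {crit : α → V × V} {f g : α} (hzg : 0 ≤ z g) (hzfg : z f ≤ z g)
    (hpair : (crit f).1 ∈ t g ∧ (crit f).2 ∈ h g)
    (hmax : ∀ u ∈ t g, ∀ v ∈ h g,
      (max (x u - x v) 0) ^ 2 ≤ (max (x (crit g).1 - x (crit g).2) 0) ^ 2) :
    z f * (max (x (crit f).1 - x (crit f).2) 0) ^ 2 ≤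
      z g * (max (x (crit g).1 - x (crit g).2) 0) ^ 2 :=
  mul_le_mul hzfg (hmax _ hpair.1 _ hpair.2) (sq_nonneg _) hzg

/-- Let `H = (V,F,z)` be a directed hypergraph, `S ⊆ F` a `λ`-coreset (given with its
partition `Suv`), and `x ∈ ℝ^V` with `xᵀ L_H(x) = 1`.  For `i ∈ ℤ` let
`F_i^x = {f ∈ F \ S : Q_H^x(f) ∈ [1/(2^i λ), 1/(2^{i−1} λ))}` and let `E_i^x` be the set of
`x`-critical pairs of hyperarcs in `F_i^x`.  Then `|E_i^x| < 2^i`. -/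
theorem stmt2 {V α : Type*} [Fintype V] [DecidableEq V] [DecidableEq α]
    (F : Finset α) (t h : α → Finset V) (z : α → ℝ) (hz : ∀ f ∈ F, 0 ≤ z f)
    (lam : ℕ) (hlam : 0 < lam)
    (S : Finset α) (hSF : S ⊆ F)
    (Suv : V × V → Finset α)
    (hdisj : ∀ p q : V × V, p ≠ q → Disjoint (Suv p) (Suv q))
    (hS : S = Finset.univ.biUnion Suv)
    (hmem : ∀ p : V × V, ∀ f ∈ Suv p, p.1 ∈ t f ∧ p.2 ∈ h f)
    (hfull : ∀ p : V × V, (∃ f ∈ F \ S, p.1 ∈ t f ∧ p.2 ∈ h f) → (Suv p).card = lam)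
    (hheavy : ∀ p : V × V, ∀ f ∈ Suv p, ∀ f' ∈ F \ S,
      p.1 ∈ t f' → p.2 ∈ h f' → z f' ≤ z f)
    (x : V → ℝ) (crit : α → V × V)
    (hcrit : ∀ f ∈ F, (crit f).1 ∈ t f ∧ (crit f).2 ∈ h f)
    (hmax : ∀ f ∈ F, ∀ u ∈ t f, ∀ v ∈ h f,
      (max (x u - x v) 0) ^ 2 ≤ (max (x (crit f).1 - x (crit f).2) 0) ^ 2)
    (Q : α → ℝ) (hQ : ∀ f, Q f = z f * (max (x (crit f).1 - x (crit f).2) 0) ^ 2)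
    (hnorm : ∑ f ∈ F, Q f = 1)
    (i : ℤ)
    (Fi : Finset α)
    (hFi : Fi = (F \ S).filter
      (fun f => (2 : ℝ) ^ (-i) / lam ≤ Q f ∧ Q f < (2 : ℝ) ^ (-(i - 1)) / lam)) :
    ((Fi.image crit).card : ℝ) < (2 : ℝ) ^ i := by
  have hFiS : Fi ⊆ F \ S := hFi ▸ filter_subset _ _
  have hlow : ∀ f ∈ Fi, (2 : ℝ) ^ (-i) / lam ≤ Q f := fun f hf => (mem_filter.mp (hFi ▸ hf)).2.1
  have hSuvS : ∀ p, Suv p ⊆ S := fun p => hS ▸ subset_biUnion_of_mem Suv (mem_univ p)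
  have hcoreset : ∀ p ∈ Fi.image crit,
      #(Suv p) = lam ∧ ∀ g ∈ Suv p, (2 : ℝ) ^ (-i) / lam ≤ Q g := by
    intro p hp
    obtain ⟨f, hf, rfl⟩ := mem_image.mp hp
    obtain ⟨hu, hv⟩ := hcrit f (mem_sdiff.mp (hFiS hf)).1
    refine ⟨hfull _ ⟨f, hFiS hf, hu, hv⟩, fun g hg => (hlow f hf).trans ?_⟩
    have hgF : g ∈ F := hSF (hSuvS _ hg)
    rw [hQ, hQ]
    exact mul_sq_critical_le_of_heavier (hz g hgF) (hheavy _ g hg f (hFiS hf) hu hv)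
      (hmem _ g hg) (hmax g hgF)
  obtain rfl | ⟨f₀, hf₀⟩ := Fi.eq_empty_or_nonempty
  · simpa using zpow_pos two_pos i
  have hcoresetMass := card_mul_le_sum_biUnion (fun p _ q _ hpq => hdisj p q hpq)
    (fun p hp => (hcoreset p hp).1) (fun p hp => (hcoreset p hp).2)
  rw [mul_div_cancel₀ _ (by exact_mod_cast hlam.ne')] at hcoresetMass
  have hcoresetS : (Fi.image crit).biUnion Suv ⊆ S := biUnion_subset.mpr fun p _ => hSuvS p
  have htotal := sum_add_sum_le_of_disjoint
    (fun f hf => hQ f ▸ mul_nonneg (hz f hf) (sq_nonneg _)) (hcoresetS.trans hSF)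
    (hFiS.trans sdiff_subset) ((disjoint_sdiff.mono_left hcoresetS).mono_right hFiS)
  have hFiMass : 0 < ∑ f ∈ Fi, Q f :=
    sum_pos (fun f hf => (by positivity : (0 : ℝ) < 2 ^ (-i) / lam).trans_le (hlow f hf))
      ⟨f₀, hf₀⟩
  have hlt : (#(Fi.image crit) : ℝ) * 2 ^ (-i) < 1 := by linarith
  rwa [zpow_neg, ← div_eq_mul_inv, div_lt_one (zpow_pos two_pos i)] at hlt
end

section
/- For every n ∈ ℤ>0 and every ε ∈ (1/(4n), 1) such that 1/(8ε) is an integer, there exists a directed hypergraph H = (V,F,z) with 2n vertices, Ω(n²/ε) hyperarcs, all hyperarcs of rank three (|t(f)| = 2, |h(f)| = 1), such that no proper re-weighted sub-hypergraph H̃ = (V, F̃, z̃) with F̃ ⊊ F satisfies (1−ε)·x^⊤L_H(x) ≤ x^⊤L_{H̃}(x) ≤ (1+ε)·x^⊤L_H(x) for all x ∈ {0,1}^V. -/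
open Finset
open scoped NNReal

/-!
Index the hyperarcs by `(i, d, k)`: tail `{u i, u (i + d)}`, head `{w k}`, with `d` ranging over a
set `D` of shifts such that `d + d' ≠ 0` for all `d, d' ∈ D`; then the tail `{i, i + d}` determines
`(i, d)`. For the cuts `S_A = u(A) ∪ w(G ∖ {k})`, an arc is cut iff its head is `k` and its tail
meets `A`, so the cut function is modular on `S_{i}, S_{i+d}, S_{i,i+d}` except for the single arc
`(i, d, k)`, which is cut by both `S_{i}` and `S_{i+d}`. A sub-hypergraph without that arc has a
modular cut function there, while `S_{i}` and `S_{i+d}` each cut at most `2|D|` arcs; with unit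
weights and `|D| = 1/(8ε)` the three `(1 ± ε)` approximations are then incompatible.
-/

/-- The energy `max_{u∈t(f), v∈h(f)} (x_u − x_v)₊²` of a hyperarc `f = (t(f), h(f))`
at a point `x`. -/
noncomputable def dirEnergy {V : Type*} [DecidableEq V]
    (x : V → ℝ) (f : Finset V × Finset V) : ℝ :=
  (((f.1 ×ˢ f.2).sup fun p => Real.toNNReal (x p.1 - x p.2) ^ 2 : ℝ≥0) : ℝ)

open Function

section Cuts

variable {V : Type*}

def cutArcs (S : Set V) : Set (Finset V × Finset V) :=
  {f | (∃ a ∈ f.1, a ∈ S) ∧ ∃ b ∈ f.2, b ∉ S}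

noncomputable def cutWeight (F : Finset (Finset V × Finset V)) (z : Finset V × Finset V → ℝ)
    (S : Set V) : ℝ :=
  ∑ f ∈ F, (cutArcs S).indicator z f

def IsCutSparsifier (ε : ℝ) (F : Finset (Finset V × Finset V)) (z : Finset V × Finset V → ℝ)
    (Ft : Finset (Finset V × Finset V)) (zt : Finset V × Finset V → ℝ) : Prop :=
  ∀ S : Set V, (1 - ε) * cutWeight F z S ≤ cutWeight Ft zt S ∧
    cutWeight Ft zt S ≤ (1 + ε) * cutWeight F z S

lemma cutWeight_add_cutWeight {F : Finset (Finset V × Finset V)} {z : Finset V × Finset V → ℝ}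
    {S₁ S₂ S₁₂ : Set V} (h₁₂ : ∀ f ∈ F, f ∈ cutArcs S₁₂ ↔ f ∈ cutArcs S₁ ∪ cutArcs S₂) :
    cutWeight F z S₁ + cutWeight F z S₂ =
      cutWeight F z S₁₂ + ∑ f ∈ F, (cutArcs S₁ ∩ cutArcs S₂).indicator z f := by
  classical
  unfold cutWeight
  rw [← sum_add_distrib, ← sum_add_distrib]
  refine sum_congr rfl fun f hf => ?_
  rw [← Set.indicator_union_add_inter_apply]
  simp only [Set.indicator_apply, h₁₂ f hf]

lemma not_isCutSparsifier_of_cutWeight_inter {ε : ℝ} {F Ft : Finset (Finset V × Finset V)}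
    {z zt : Finset V × Finset V → ℝ} {S₁ S₂ S₁₂ : Set V} {f₀ : Finset V × Finset V}
    (hFt : Ft ⊆ F) (h₁₂ : ∀ f ∈ F, f ∈ cutArcs S₁₂ ↔ f ∈ cutArcs S₁ ∪ cutArcs S₂)
    (hFt_inter : ∀ f ∈ Ft, f ∉ cutArcs S₁ ∩ cutArcs S₂) (hz : ∀ f ∈ F, 0 ≤ z f)
    (hf₀ : f₀ ∈ F) (hf₀_inter : f₀ ∈ cutArcs S₁ ∩ cutArcs S₂) (hε₁ : 0 ≤ 1 + ε)
    (hε : 2 * ε * (cutWeight F z S₁ + cutWeight F z S₂) < (1 + ε) * z f₀) :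
    ¬ IsCutSparsifier ε F z Ft zt := by
  intro h
  have hF := cutWeight_add_cutWeight (z := z) h₁₂
  have hFt' := cutWeight_add_cutWeight (z := zt) fun f hf => h₁₂ f (hFt hf)
  rw [sum_eq_zero fun f hf => Set.indicator_of_notMem (hFt_inter f hf) zt] at hFt'
  have hz₀ : z f₀ ≤ ∑ f ∈ F, (cutArcs S₁ ∩ cutArcs S₂).indicator z f := by
    calc z f₀ = (cutArcs S₁ ∩ cutArcs S₂).indicator z f₀ :=
          (Set.indicator_of_mem hf₀_inter z).symm
      _ ≤ _ := single_le_sum (f := (cutArcs S₁ ∩ cutArcs S₂).indicator z)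
          (fun f hf => Set.indicator_nonneg (fun _ _ => hz f hf) f) hf₀
  have hF' := congrArg ((1 + ε) * ·) hF
  linarith [(h S₁).1, (h S₂).1, (h S₁₂).2, mul_le_mul_of_nonneg_left hz₀ hε₁]

variable [DecidableEq V]

lemma dirEnergy_indicator_one (S : Set V) (f : Finset V × Finset V) :
    dirEnergy (S.indicator 1) f = (cutArcs S).indicator 1 f := by
  set g := {p : V × V | p.1 ∈ S ∧ p.2 ∉ S}.indicator (1 : V × V → ℝ≥0)
  have hterm :
      (fun p : V × V => Real.toNNReal (S.indicator 1 p.1 - S.indicator 1 p.2) ^ 2) = g := by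
    ext ⟨a, b⟩
    by_cases ha : a ∈ S <;> by_cases hb : b ∈ S <;> simp [g, ha, hb]
  unfold dirEnergy
  rw [hterm]
  by_cases hf : f ∈ cutArcs S
  · obtain ⟨⟨a, ha, haS⟩, ⟨b, hb, hbS⟩⟩ := hf
    have hsup : (f.1 ×ˢ f.2).sup g = 1 := by
      refine le_antisymm (Finset.sup_le fun p _ => Set.indicator_le_self' (by simp) p) ?_
      calc (1 : ℝ≥0) = g (a, b) := by simp [g, haS, hbS]
        _ ≤ _ := Finset.le_sup (f := g) (mem_product.2 ⟨ha, hb⟩)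
    have hf : f ∈ cutArcs S := ⟨⟨a, ha, haS⟩, ⟨b, hb, hbS⟩⟩
    rw [hsup, Set.indicator_of_mem hf]
    simp
  · have hsup : (f.1 ×ˢ f.2).sup g = 0 := by
      refine Finset.sup_eq_bot_iff _ _ |>.2 fun p hp => Set.indicator_of_notMem ?_ _
      obtain ⟨hp₁, hp₂⟩ := mem_product.1 hp
      exact fun hpS => hf ⟨⟨p.1, hp₁, hpS.1⟩, ⟨p.2, hp₂, hpS.2⟩⟩
    rw [hsup, Set.indicator_of_notMem hf]
    simp

lemma sum_mul_dirEnergy_indicator_one (F : Finset (Finset V × Finset V))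
    (z : Finset V × Finset V → ℝ) (S : Set V) :
    ∑ f ∈ F, z f * dirEnergy (S.indicator 1) f = cutWeight F z S := by
  classical
  simp only [cutWeight, dirEnergy_indicator_one, Set.indicator_apply, Pi.one_apply, mul_ite,
    mul_one, mul_zero]

lemma isCutSparsifier_of_forall_binary {ε : ℝ} {F Ft : Finset (Finset V × Finset V)}
    {z zt : Finset V × Finset V → ℝ}
    (h : ∀ x : V → ℝ, (∀ v, x v = 0 ∨ x v = 1) →
      (1 - ε) * (∑ f ∈ F, z f * dirEnergy x f) ≤ (∑ f ∈ Ft, zt f * dirEnergy x f) ∧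
      (∑ f ∈ Ft, zt f * dirEnergy x f) ≤ (1 + ε) * (∑ f ∈ F, z f * dirEnergy x f)) :
    IsCutSparsifier ε F z Ft zt := by
  intro S
  have hS : ∀ v, S.indicator (1 : V → ℝ) v = 0 ∨ S.indicator (1 : V → ℝ) v = 1 := by
    intro v
    by_cases hv : v ∈ S <;> simp [hv]
  simpa only [sum_mul_dirEnergy_indicator_one] using h (S.indicator 1) hS

end Cuts

namespace ShiftHypergraph

variable {G V : Type*} [AddCommGroup G] [DecidableEq V] (u w : G → V)

def arc (p : G × G × G) : Finset V × Finset V :=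
  ({u p.1, u (p.1 + p.2.1)}, {w p.2.2})

def arcs [Fintype G] (D : Finset G) : Finset (Finset V × Finset V) :=
  (univ ×ˢ D ×ˢ univ).image (arc u w)

def probeSet (A : Set G) (k : G) : Set V :=
  u '' A ∪ w '' {k}ᶜ

variable {u w}

lemma arc_mem_cutArcs_probeSet_iff (hu : Injective u) (hw : Injective w) (huw : ∀ a b, u a ≠ w b)
    {A : Set G} {k : G} {p : G × G × G} :
    arc u w p ∈ cutArcs (probeSet u w A k) ↔ (p.1 ∈ A ∨ p.1 + p.2.1 ∈ A) ∧ p.2.2 = k := by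
  have hu_mem : ∀ a, u a ∈ probeSet u w A k ↔ a ∈ A := fun a => by
    simp [probeSet, hu.mem_set_image, fun b => (huw a b).symm]
  have hw_mem : ∀ b, w b ∈ probeSet u w A k ↔ b ≠ k := fun b => by
    simp [probeSet, hw.mem_set_image, huw]
  simp [cutArcs, arc, hu_mem, hw_mem]

variable [Fintype G] {D : Finset G}

lemma eq_of_arc_mem_cutArcs_inter (hu : Injective u) (hw : Injective w) (huw : ∀ a b, u a ≠ w b)
    (hD : ∀ d ∈ D, ∀ d' ∈ D, d + d' ≠ 0) {p q : G × G × G}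
    (hp : p ∈ univ ×ˢ D ×ˢ univ) (hq : q ∈ univ ×ˢ D ×ˢ univ)
    (h : arc u w p ∈ cutArcs (probeSet u w {q.1} q.2.2) ∩
      cutArcs (probeSet u w {q.1 + q.2.1} q.2.2)) :
    p = q := by
  obtain ⟨i', d', k'⟩ := p
  obtain ⟨i, d, k⟩ := q
  simp only [mem_product, mem_univ, true_and, and_true] at hp hq
  have hd0 : d ≠ 0 := fun h => hD d hq d hq (by rw [h, add_zero])
  simp only [Set.mem_inter_iff, arc_mem_cutArcs_probeSet_iff hu hw huw,
    Set.mem_singleton_iff] at h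
  obtain ⟨⟨hi | hi, rfl⟩, hi' | hi', -⟩ := h
  · subst hi
    exact absurd (left_eq_add.1 hi') hd0
  · subst hi
    rw [add_left_cancel hi']
  · subst hi'
    rw [add_assoc] at hi
    exact absurd (left_eq_add.1 hi.symm) (hD d hq d' hp)
  · rw [hi] at hi'
    exact absurd (left_eq_add.1 hi') hd0

lemma arc_injOn (hu : Injective u) (hw : Injective w) (huw : ∀ a b, u a ≠ w b)
    (hD : ∀ d ∈ D, ∀ d' ∈ D, d + d' ≠ 0) :
    Set.InjOn (arc u w) (univ ×ˢ D ×ˢ univ : Finset (G × G × G)) := by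
  intro p hp q hq h
  refine eq_of_arc_mem_cutArcs_inter hu hw huw hD hp hq ?_
  simp [h, arc_mem_cutArcs_probeSet_iff hu hw huw]

lemma card_arcs (hu : Injective u) (hw : Injective w) (huw : ∀ a b, u a ≠ w b)
    (hD : ∀ d ∈ D, ∀ d' ∈ D, d + d' ≠ 0) :
    #(arcs u w D) = Fintype.card G * (#D * Fintype.card G) := by
  rw [arcs, card_image_of_injOn (arc_injOn hu hw huw hD), card_product, card_product, card_univ]

lemma card_tail_head_of_mem_arcs (hu : Injective u) (hD : ∀ d ∈ D, ∀ d' ∈ D, d + d' ≠ 0)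
    {f : Finset V × Finset V} (hf : f ∈ arcs u w D) : #f.1 = 2 ∧ #f.2 = 1 := by
  obtain ⟨⟨i, d, k⟩, hp, rfl⟩ := mem_image.1 hf
  have hdD : d ∈ D := by simpa using hp
  have hd : d ≠ 0 := fun h => hD d hdD d hdD (by rw [h, add_zero])
  exact ⟨card_pair (hu.ne (by simpa using hd)), card_singleton _⟩

lemma cutWeight_arcs_probeSet_singleton_le [DecidableEq G] (hu : Injective u) (hw : Injective w)
    (huw : ∀ a b, u a ≠ w b) (a k : G) :
    cutWeight (arcs u w D) 1 (probeSet u w {a} k) ≤ 2 * #D := by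
  classical
  set I : Finset (G × G × G) := univ ×ˢ D ×ˢ univ
  have hcut : {p ∈ I | arc u w p ∈ cutArcs (probeSet u w {a} k)} ⊆
      D.image (fun d => (a, d, k)) ∪ D.image (fun d => (a - d, d, k)) := by
    intro ⟨i, d, k'⟩ hp
    simp only [I, mem_filter, mem_product, mem_univ, true_and, and_true,
      arc_mem_cutArcs_probeSet_iff hu hw huw, Set.mem_singleton_iff] at hp
    obtain ⟨hd, hi | hi, rfl⟩ := hp
    · exact mem_union_left _ (mem_image.2 ⟨d, hd, by rw [hi]⟩)
    · exact mem_union_right _ (mem_image.2 ⟨d, hd, by rw [← hi, add_sub_cancel_right]⟩)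
  calc cutWeight (arcs u w D) 1 (probeSet u w {a} k)
      ≤ ∑ p ∈ I, (cutArcs (probeSet u w {a} k)).indicator 1 (arc u w p) :=
        sum_image_le_of_nonneg fun _ _ => Set.indicator_nonneg (fun _ _ => zero_le_one) _
    _ = #{p ∈ I | arc u w p ∈ cutArcs (probeSet u w {a} k)} := by
        rw [sum_indicator_eq_sum_filter]
        simp
    _ ≤ #(D.image (fun d => (a, d, k)) ∪ D.image (fun d => (a - d, d, k))) := by
        exact_mod_cast card_le_card hcut
    _ ≤ 2 * #D := by
        have := (card_union_le (D.image fun d => (a, d, k)) (D.image fun d => (a - d, d, k))).trans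
          (add_le_add card_image_le card_image_le)
        exact_mod_cast this.trans_eq (two_mul _).symm

theorem not_isCutSparsifier_arcs [DecidableEq G] (hu : Injective u) (hw : Injective w)
    (huw : ∀ a b, u a ≠ w b) (hD : ∀ d ∈ D, ∀ d' ∈ D, d + d' ≠ 0) {ε : ℝ} (hε₀ : 0 ≤ ε)
    (hε : 8 * ε * #D < 1 + ε) {Ft : Finset (Finset V × Finset V)} (hFt : Ft ⊂ arcs u w D)
    (zt : Finset V × Finset V → ℝ) :
    ¬ IsCutSparsifier ε (arcs u w D) 1 Ft zt := by
  obtain ⟨f₀, hf₀, hf₀Ft⟩ := exists_of_ssubset hFt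
  obtain ⟨⟨i, d, k⟩, hp, rfl⟩ := mem_image.1 hf₀
  refine not_isCutSparsifier_of_cutWeight_inter (S₁ := probeSet u w {i} k)
    (S₂ := probeSet u w {i + d} k) (S₁₂ := probeSet u w {i, i + d} k) hFt.subset ?_ ?_
    (fun _ _ => zero_le_one) hf₀ (by simp [arc_mem_cutArcs_probeSet_iff hu hw huw])
    (by linarith) ?_
  · intro f hf
    obtain ⟨q, -, rfl⟩ := mem_image.1 hf
    simp only [Set.mem_union, arc_mem_cutArcs_probeSet_iff hu hw huw, Set.mem_insert_iff,
      Set.mem_singleton_iff]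
    tauto
  · intro f hf hf_inter
    obtain ⟨q, hq, rfl⟩ := mem_image.1 (hFt.subset hf)
    exact hf₀Ft (eq_of_arc_mem_cutArcs_inter hu hw huw hD hq hp hf_inter ▸ hf)
  · calc 2 * ε * (cutWeight (arcs u w D) 1 (probeSet u w {i} k) +
          cutWeight (arcs u w D) 1 (probeSet u w {i + d} k))
        ≤ 2 * ε * (2 * #D + 2 * #D) := by
          gcongr <;> exact cutWeight_arcs_probeSet_singleton_le hu hw huw _ _
      _ = 8 * ε * #D := by ring
      _ < (1 + ε) * 1 := by rwa [mul_one]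

end ShiftHypergraph

open ShiftHypergraph

open Fin.NatCast in
lemma exists_finset_fin_card_eq_add_ne_zero {n s : ℕ} [NeZero n] (h : 2 * s < n) :
    ∃ D : Finset (Fin n), #D = s ∧ ∀ d ∈ D, ∀ d' ∈ D, d + d' ≠ 0 := by
  refine ⟨(Icc 1 s).image Nat.cast, ?_, ?_⟩
  · rw [card_image_of_injOn, Nat.card_Icc, Nat.add_sub_cancel]
    intro a ha b hb hab
    simp only [coe_Icc, Set.mem_Icc] at ha hb
    have := congrArg Fin.val hab
    rwa [Fin.val_cast_of_lt (by omega), Fin.val_cast_of_lt (by omega)] at this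
  · simp only [mem_image, mem_Icc]
    rintro _ ⟨a, ha, rfl⟩ _ ⟨b, hb, rfl⟩ hab
    rw [← Nat.cast_add, Fin.natCast_eq_zero] at hab
    have := Nat.le_of_dvd (by omega) hab
    omega

lemma exists_disjoint_embeddings_fin_two_mul (n : ℕ) :
    ∃ u w : Fin n → Fin (2 * n), Injective u ∧ Injective w ∧ ∀ a b, u a ≠ w b := by
  refine ⟨Fin.castLE (by omega), fun k => ⟨n + k, by omega⟩, Fin.castLE_injective _,
    fun a b h => Fin.ext (by simpa using congrArg Fin.val h), fun a b h => ?_⟩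
  have := congrArg Fin.val h
  simp only [Fin.val_castLE] at this
  omega

/-- Lower bound: for every `n` and `ε ∈ (1/(4n), 1)` with `1/(8ε)` an integer, there is a
directed hypergraph on `2n` vertices with at least `n²/(8ε)` hyperarcs, all of rank three
(`|t(f)| = 2`, `|h(f)| = 1`), such that no proper re-weighted sub-hypergraph is an
`ε`-cut/spectral approximation over all `x ∈ {0,1}^V`. -/
theorem stmt8 (n : ℕ) (hn : 0 < n) (ε : ℝ)
    (hε : ε ∈ Set.Ioo (1 / (4 * (n : ℝ))) 1)
    (hint : ∃ s : ℕ, (s : ℝ) = 1 / (8 * ε)) :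
    ∃ (F : Finset (Finset (Fin (2 * n)) × Finset (Fin (2 * n))))
      (z : Finset (Fin (2 * n)) × Finset (Fin (2 * n)) → ℝ),
      (∀ f ∈ F, f.1.card = 2 ∧ f.2.card = 1) ∧
      (∀ f ∈ F, 0 < z f) ∧
      ((n : ℝ) ^ 2 / (8 * ε) ≤ F.card) ∧
      ∀ Ft : Finset (Finset (Fin (2 * n)) × Finset (Fin (2 * n))), Ft ⊂ F →
        ∀ zt : Finset (Fin (2 * n)) × Finset (Fin (2 * n)) → ℝ, (∀ f ∈ Ft, 0 ≤ zt f) →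
          ¬ (∀ x : Fin (2 * n) → ℝ, (∀ v, x v = 0 ∨ x v = 1) →
              (1 - ε) * (∑ f ∈ F, z f * dirEnergy x f) ≤ (∑ f ∈ Ft, zt f * dirEnergy x f) ∧
              (∑ f ∈ Ft, zt f * dirEnergy x f) ≤ (1 + ε) * (∑ f ∈ F, z f * dirEnergy x f)) := by
  obtain ⟨hε₁, -⟩ := hε
  obtain ⟨s, hs⟩ := hint
  have : NeZero n := ⟨hn.ne'⟩
  have hε₀ : 0 < ε := lt_trans (by positivity) hε₁
  have hsε : 8 * ε * s = 1 := by rw [hs]; field_simp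
  have h2s : 2 * s < n := by
    have : 1 < 4 * n * ε := by rwa [div_lt_iff₀ (by positivity), mul_comm] at hε₁
    exact_mod_cast (by nlinarith : (2 * s : ℝ) < n)
  obtain ⟨D, hDcard, hD⟩ := exists_finset_fin_card_eq_add_ne_zero h2s
  obtain ⟨u, w, hu, hw, huw⟩ := exists_disjoint_embeddings_fin_two_mul n
  refine ⟨arcs u w D, 1, fun f hf => card_tail_head_of_mem_arcs hu hD hf, fun _ _ => one_pos,
    ?_, ?_⟩
  · rw [card_arcs hu hw huw hD, hDcard, Fintype.card_fin]
    push_cast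
    rw [hs]
    exact le_of_eq (by ring)
  · intro Ft hFt zt _ hx
    exact not_isCutSparsifier_arcs hu hw huw hD hε₀.le (by rw [hDcard]; linarith) hFt zt
      (isCutSparsifier_of_forall_binary hx)
end

section
/- Let G' be a k-spanner (with respect to lengths 1/w_e) of the associated multi-graph G of an undirected hypergraph H = (V,F,z), where each edge e of G arises from replacing a hyperedge f_e ∈ F by its clique C(f_e) and has weight w_e = z_{f_e}. Then S = {f_e : e ∈ G'} is a k-hyperspanner of H: for every f ∈ F and every pair {u,v} ⊆ f with u ≠ v, there is a u–v hyperpath P ⊆ S with ∑_{f'∈P} 1/z_{f'} ≤ k/z_f. -/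
open Finset

/-- `IsHyperpath ed u v L` means: the list of hyperedges `L = [f₁, …, f_ℓ]` (with vertex sets
given by `ed`) is a `u`–`v` hyperpath, i.e. `ℓ ≥ 1`, `u ∈ f₁`, `v ∈ f_ℓ`, and consecutive
hyperedges intersect. -/
def IsHyperpath {V α : Type*} (ed : α → Finset V) : V → V → List α → Prop
  | _, _, [] => False
  | u, v, [f] => u ∈ ed f ∧ v ∈ ed f
  | u, v, f :: g :: L => u ∈ ed f ∧ ∃ w ∈ ed f, IsHyperpath ed w v (g :: L)

theorem IsHyperpath.map {V α β : Type*} {ed : α → Finset V} {ep : β → Finset V} {g : β → α} :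
    ∀ {u v : V} {L : List β}, (∀ e ∈ L, ep e ⊆ ed (g e)) →
      IsHyperpath ep u v L → IsHyperpath ed u v (L.map g)
  | _, _, [], _, h => h.elim
  | _, _, [e], hsub, ⟨hu, hv⟩ => ⟨hsub e List.mem_cons_self hu, hsub e List.mem_cons_self hv⟩
  | _, _, e :: _ :: _, hsub, ⟨hu, w, hw, hrest⟩ =>
      ⟨hsub e List.mem_cons_self hu, w, hsub e List.mem_cons_self hw,
        IsHyperpath.map (fun e' he' => hsub e' (List.mem_cons_of_mem _ he')) hrest⟩

theorem stmt10_general {V α β : Type*} [DecidableEq V] [DecidableEq α]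
    (F : Finset α) (ed : α → Finset V) (z : α → ℝ)
    (E : Finset β) (ep : β → Finset V) (forig : β → α)
    (hE : ∀ e ∈ E, forig e ∈ F ∧ ep e ⊆ ed (forig e) ∧ (ep e).card = 2)
    (hfull : ∀ f ∈ F, ∀ u ∈ ed f, ∀ v ∈ ed f, u ≠ v →
      ∃ e ∈ E, ep e = {u, v} ∧ forig e = f)
    (k : ℝ)
    (T : Finset β) (hT : T ⊆ E)
    (hspanner : ∀ e ∈ E, ∀ u ∈ ep e, ∀ v ∈ ep e, u ≠ v →
      ∃ L : List β, (∀ e' ∈ L, e' ∈ T) ∧ IsHyperpath ep u v L ∧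
        (L.map fun e' => 1 / z (forig e')).sum ≤ k / z (forig e)) :
    ∀ f ∈ F, ∀ u ∈ ed f, ∀ v ∈ ed f, u ≠ v →
      ∃ L : List α, (∀ g ∈ L, g ∈ T.image forig) ∧ IsHyperpath ed u v L ∧
        (L.map fun g => 1 / z g).sum ≤ k / z f := by
  intro f hf u hu v hv huv
  obtain ⟨e, heE, hep, rfl⟩ := hfull f hf u hu v hv huv
  obtain ⟨L, hLT, hpath, hlen⟩ :=
    hspanner e heE u (by simp [hep]) v (by simp [hep]) huv
  refine ⟨L.map forig, List.forall_mem_map.2 fun e' he' => mem_image_of_mem _ (hLT e' he'),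
    hpath.map fun e' he' => (hE e' (hT (hLT e' he'))).2.1, ?_⟩
  rwa [List.map_map]

/-- If `T` is a `k`-spanner (w.r.t. lengths `1/w_e`) of the associated multigraph of an
undirected hypergraph `H = (V,F,z)` — where each edge `e` comes from a hyperedge `forig e`,
has its two endpoints inside `ed (forig e)`, weight `z (forig e)`, and every pair inside
every hyperedge is present — then `S = {f_e : e ∈ T}` is a `k`-hyperspanner of `H`: for
every `f ∈ F` and distinct `u, v ∈ f` there is a `u`–`v` hyperpath `P ⊆ S`
with `∑_{f'∈P} 1/z_{f'} ≤ k/z_f`. -/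
theorem stmt10 {V α β : Type*} [DecidableEq V] [DecidableEq α]
    (F : Finset α) (ed : α → Finset V) (z : α → ℝ) (hz : ∀ f ∈ F, 0 < z f)
    (E : Finset β) (ep : β → Finset V) (forig : β → α)
    (hE : ∀ e ∈ E, forig e ∈ F ∧ ep e ⊆ ed (forig e) ∧ (ep e).card = 2)
    (hfull : ∀ f ∈ F, ∀ u ∈ ed f, ∀ v ∈ ed f, u ≠ v →
      ∃ e ∈ E, ep e = {u, v} ∧ forig e = f)
    (k : ℝ) (hk : 1 ≤ k)
    (T : Finset β) (hT : T ⊆ E)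
    (hspanner : ∀ e ∈ E, ∀ u ∈ ep e, ∀ v ∈ ep e, u ≠ v →
      ∃ L : List β, (∀ e' ∈ L, e' ∈ T) ∧ IsHyperpath ep u v L ∧
        (L.map fun e' => 1 / z (forig e')).sum ≤ k / z (forig e)) :
    ∀ f ∈ F, ∀ u ∈ ed f, ∀ v ∈ ed f, u ≠ v →
      ∃ L : List α, (∀ g ∈ L, g ∈ T.image forig) ∧ IsHyperpath ed u v L ∧
        (L.map fun g => 1 / z g).sum ≤ k / z f :=
  stmt10_general F ed z E ep forig hE hfull k T hT hspanner
end

section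
/- Let H = (V,F,z) be an undirected hypergraph with n = |V| and |f| ∈ (r/2, r] for every f ∈ F, and let G be its associated graph. Let S ⊆ F be a bundle of λ disjoint (log n)-hyperspanners. Then for every hyperedge f ∈ F∖S and every pair {u,v} ⊆ f with u ≠ v, z_f · R_G(u,v) ≤ 4·log n / (r·λ), where R_G(u,v) is the effective resistance of the pair (u,v) in G. -/
open Finset

/-!
For a potential `x` of unit energy put `Q g = ∑_{a ≠ b ∈ g} (x a - x b)²`. Centring `x` at its
mean on `g` shows `|g| (x a - x b)² ≤ Q g` for all `a, b ∈ g`. Along a `u`–`v` hyperpath `P` in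
the spanner `S_j`, the triangle inequality over the distinct hyperedges of `P` and
Cauchy–Schwarz then give
`(x u - x v)² ≤ (∑_P 1/z) (∑_P z_g Q_g / |g|) ≤ (log n / z_f) (2/r) ∑_{S_j} z_g Q_g`.
The spanners are disjoint, so their energies `∑_{S_j} z_g Q_g` add up to at most the total
energy `2`, and summing over `j` gives `λ (x u - x v)² ≤ 4 log n / (r z_f)`.
-/

section Variance
variable {V : Type*} [DecidableEq V]

theorem sum_offDiag_sq_sub_eq (s : Finset V) (y : V → ℝ) :
    ∑ p ∈ s.offDiag, (y p.1 - y p.2) ^ 2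
      = 2 * (#s * ∑ a ∈ s, y a ^ 2 - (∑ a ∈ s, y a) ^ 2) := by
  have hdiag : ∑ p ∈ s.diag, (y p.1 - y p.2) ^ 2 = 0 := by simp [sum_diag]
  rw [← zero_add (∑ p ∈ s.offDiag, _), ← hdiag, ← sum_union (disjoint_diag_offDiag s),
    diag_union_offDiag, sum_product]
  simp only [sub_sq, sum_add_distrib, sum_sub_distrib, ← mul_sum, ← sum_mul, sum_const,
    nsmul_eq_mul]
  ring

theorem card_mul_sq_sub_le_sum_offDiag {s : Finset V} (x : V → ℝ) {u v : V}
    (hu : u ∈ s) (hv : v ∈ s) :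
    #s * (x u - x v) ^ 2 ≤ ∑ p ∈ s.offDiag, (x p.1 - x p.2) ^ 2 := by
  rcases eq_or_ne u v with rfl | huv
  · rw [sub_self, zero_pow two_ne_zero, mul_zero]
    exact sum_nonneg fun p _ => sq_nonneg _
  have hs : (0 : ℝ) < #s := by exact_mod_cast card_pos.mpr ⟨u, hu⟩
  set m := (∑ a ∈ s, x a) / #s
  have hcentred : ∑ a ∈ s, (x a - m) = 0 := by
    rw [sum_sub_distrib, sum_const, nsmul_eq_mul, mul_div_cancel₀ _ hs.ne', sub_self]
  have hvar := sum_offDiag_sq_sub_eq s (fun a => x a - m)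
  simp only [sub_sub_sub_cancel_right, hcentred] at hvar
  have hpair : (x u - m) ^ 2 + (x v - m) ^ 2 ≤ ∑ a ∈ s, (x a - m) ^ 2 := by
    rw [← sum_pair (f := fun a => (x a - m) ^ 2) huv]
    exact sum_le_sum_of_subset_of_nonneg (insert_subset hu (singleton_subset_iff.2 hv))
      fun _ _ _ => sq_nonneg _
  rw [hvar]
  nlinarith [sq_nonneg (x u + x v - 2 * m)]

end Variance

theorem List.sum_toFinset_le_sum_map {α M : Type*} [DecidableEq α] [AddCommMonoid M]
    [PartialOrder M] [IsOrderedAddMonoid M] {L : List α} {f : α → M} (hf : ∀ g ∈ L, 0 ≤ f g) :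
    ∑ g ∈ L.toFinset, f g ≤ (L.map f).sum := by
  have hdedup : L.dedup.toFinset = L.toFinset := by ext; simp
  rw [← hdedup, List.sum_toFinset _ (List.nodup_dedup L)]
  exact ((List.dedup_sublist L).map f).sum_le_sum fun a ha => by
    obtain ⟨g, hg, rfl⟩ := List.mem_map.1 ha
    exact hf g hg

theorem sum_sum_le_sum_of_pairwiseDisjoint {ι β M : Type*} [DecidableEq β] [AddCommMonoid M]
    [PartialOrder M] [IsOrderedAddMonoid M] {s : Finset ι} {t : ι → Finset β} {F : Finset β}
    {E : β → M} (hdisj : (s : Set ι).PairwiseDisjoint t) (htF : ∀ i ∈ s, t i ⊆ F)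
    (hE : ∀ g ∈ F, 0 ≤ E g) :
    ∑ i ∈ s, ∑ g ∈ t i, E g ≤ ∑ g ∈ F, E g := by
  rw [← sum_biUnion hdisj]
  exact sum_le_sum_of_subset_of_nonneg (biUnion_subset.2 htF) fun g hg _ => hE g hg

namespace IsHyperpath

variable {V α : Type*} {ed : α → Finset V} {u v : V} {f : α} {L : List α}

theorem head_mem : IsHyperpath ed u v (f :: L) → u ∈ ed f := by
  cases L <;> exact fun h => h.1

variable [DecidableEq α] {x : V → ℝ} {d : α → ℝ}

/-- Stated for every vertex on the path, not only its start, so that the induction survives a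
revisited hyperedge. -/
theorem abs_sub_le_sum_toFinset_of_mem (hp : IsHyperpath ed u v L)
    (hd : ∀ g ∈ L, ∀ a ∈ ed g, ∀ b ∈ ed g, |x a - x b| ≤ d g) :
    ∀ g ∈ L, ∀ a ∈ ed g, |x a - x v| ≤ ∑ g ∈ L.toFinset, d g := by
  induction L generalizing u with
  | nil => exact hp.elim
  | cons f L ih =>
    cases L with
    | nil =>
      intro g hg a ha
      obtain rfl := List.mem_singleton.1 hg
      simpa using hd g hg a ha v hp.2
    | cons g' M =>
      obtain ⟨hu, w, hw, hp'⟩ := hp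
      have ih' := ih hp' fun g hg => hd g (List.mem_cons_of_mem f hg)
      rw [List.toFinset_cons]
      by_cases hf : f ∈ g' :: M
      · rw [insert_eq_of_mem (List.mem_toFinset.2 hf)]
        intro g hg
        rcases List.mem_cons.1 hg with rfl | hg
        exacts [ih' g hf, ih' g hg]
      · have hdf : 0 ≤ d f := (abs_nonneg _).trans (hd f List.mem_cons_self u hu u hu)
        rw [sum_insert (mt List.mem_toFinset.1 hf)]
        intro g hg a ha
        rcases List.mem_cons.1 hg with rfl | hg
        · calc |x a - x v| ≤ |x a - x w| + |x w - x v| := abs_sub_le _ _ _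
            _ ≤ d g + ∑ g ∈ (g' :: M).toFinset, d g :=
              add_le_add (hd g List.mem_cons_self a ha w hw)
                (ih' g' List.mem_cons_self w hp'.head_mem)
        · linarith [ih' g hg a ha]

theorem abs_sub_le_sum_toFinset (hp : IsHyperpath ed u v L)
    (hd : ∀ g ∈ L, ∀ a ∈ ed g, ∀ b ∈ ed g, |x a - x b| ≤ d g) :
    |x u - x v| ≤ ∑ g ∈ L.toFinset, d g := by
  cases L with
  | nil => exact hp.elim
  | cons f L => exact hp.abs_sub_le_sum_toFinset_of_mem hd f List.mem_cons_self u hp.head_mem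

theorem sq_sub_le_sum_inv_mul_sum {z c : α → ℝ} (hp : IsHyperpath ed u v L)
    (hz : ∀ g ∈ L, 0 < z g) (hc : ∀ g ∈ L, 0 ≤ c g)
    (hx : ∀ g ∈ L, ∀ a ∈ ed g, ∀ b ∈ ed g, (x a - x b) ^ 2 ≤ c g) :
    (x u - x v) ^ 2 ≤ (∑ g ∈ L.toFinset, 1 / z g) * ∑ g ∈ L.toFinset, z g * c g := by
  have hsqrt : |x u - x v| ≤ ∑ g ∈ L.toFinset, √(c g) :=
    hp.abs_sub_le_sum_toFinset fun g hg a ha b hb => Real.abs_le_sqrt (hx g hg a ha b hb)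
  calc (x u - x v) ^ 2 = |x u - x v| ^ 2 := (sq_abs _).symm
    _ ≤ (∑ g ∈ L.toFinset, √(c g)) ^ 2 := pow_le_pow_left₀ (abs_nonneg _) hsqrt 2
    _ ≤ _ := by
      have hzc : ∀ g ∈ L.toFinset, 0 < z g ∧ 0 ≤ c g := fun g hg =>
        ⟨hz g (List.mem_toFinset.1 hg), hc g (List.mem_toFinset.1 hg)⟩
      refine sum_sq_le_sum_mul_sum_of_sq_le_mul _ (fun g hg => (one_div_pos.2 (hzc g hg).1).le)
        (fun g hg => mul_nonneg (hzc g hg).1.le (hzc g hg).2) fun g hg => ?_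
      rw [Real.sq_sqrt (hzc g hg).2, one_div, inv_mul_cancel_left₀ (hzc g hg).1.ne']

end IsHyperpath

section Spanner

open Function

variable {V α : Type*} [DecidableEq V] [DecidableEq α] {ed : α → Finset V} {z : α → ℝ}

theorem sq_sub_le_of_isHyperpath_subset {T : Finset α} {r : ℝ} (hr : 0 < r)
    (hT : ∀ g ∈ T, r / 2 < #(ed g)) (hz : ∀ g ∈ T, 0 < z g) (x : V → ℝ) {u v : V}
    {L : List α} (hp : IsHyperpath ed u v L) (hLT : ∀ g ∈ L, g ∈ T) :
    (x u - x v) ^ 2 ≤ (L.map fun g => 1 / z g).sum *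
      (2 / r * ∑ g ∈ T, z g * ∑ p ∈ (ed g).offDiag, (x p.1 - x p.2) ^ 2) := by
  set Q : α → ℝ := fun g => ∑ p ∈ (ed g).offDiag, (x p.1 - x p.2) ^ 2
  have hzQ : ∀ g ∈ T, 0 ≤ z g * Q g := fun g hg =>
    mul_nonneg (hz g hg).le (sum_nonneg fun p _ => sq_nonneg _)
  have hLT' : ∀ g ∈ L.toFinset, g ∈ T := fun g hg => hLT g (List.mem_toFinset.1 hg)
  have hcs := hp.sq_sub_le_sum_inv_mul_sum (c := fun g => Q g / #(ed g))
    (fun g hg => hz g (hLT g hg)) (fun g _ => by positivity)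
    fun g hg a ha b hb => by
      have hcard : (0 : ℝ) < #(ed g) := by exact_mod_cast card_pos.2 ⟨a, ha⟩
      rw [le_div_iff₀ hcard, mul_comm]
      exact card_mul_sq_sub_le_sum_offDiag x ha hb
  have hlen : ∑ g ∈ L.toFinset, 1 / z g ≤ (L.map fun g => 1 / z g).sum :=
    L.sum_toFinset_le_sum_map fun g hg => (one_div_pos.2 (hz g (hLT g hg))).le
  have hsmall : ∑ g ∈ L.toFinset, z g * (Q g / #(ed g)) ≤ 2 / r * ∑ g ∈ T, z g * Q g := by
    rw [mul_sum]
    calc ∑ g ∈ L.toFinset, z g * (Q g / #(ed g))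
        ≤ ∑ g ∈ L.toFinset, 2 / r * (z g * Q g) := sum_le_sum fun g hg => by
          have hinv : 1 / (#(ed g) : ℝ) ≤ 2 / r := by
            have := hT g (hLT' g hg)
            rw [div_le_div_iff₀ (by linarith) hr]
            linarith
          calc z g * (Q g / #(ed g)) = 1 / #(ed g) * (z g * Q g) := by ring
            _ ≤ 2 / r * (z g * Q g) := mul_le_mul_of_nonneg_right hinv (hzQ g (hLT' g hg))
      _ ≤ ∑ g ∈ T, 2 / r * (z g * Q g) :=
          sum_le_sum_of_subset_of_nonneg hLT' fun g hg _ => mul_nonneg (by positivity) (hzQ g hg)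
  refine hcs.trans (mul_le_mul hlen hsmall (sum_nonneg fun g hg => ?_)
    ((sum_nonneg fun g hg => ?_).trans hlen))
  · rw [← mul_div_assoc]
    exact div_nonneg (hzQ g (hLT' g hg)) (Nat.cast_nonneg _)
  · exact (one_div_pos.2 (hz g (hLT' g hg))).le

theorem card_mul_sq_sub_le_of_disjoint_hyperpaths {ι : Type*} [Fintype ι] {F : Finset α}
    {Sj : ι → Finset α} {r ℓ : ℝ} (hr : 0 < r) (hℓ : 0 ≤ ℓ) (hF : ∀ g ∈ F, r / 2 < #(ed g))
    (hz : ∀ g ∈ F, 0 < z g) (hSjF : ∀ j, Sj j ⊆ F) (hdisj : Pairwise (Disjoint on Sj))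
    (x : V → ℝ) {u v : V}
    (hpaths : ∀ j, ∃ L : List α, (∀ g ∈ L, g ∈ Sj j) ∧ IsHyperpath ed u v L ∧
      (L.map fun g => 1 / z g).sum ≤ ℓ) :
    Fintype.card ι * (x u - x v) ^ 2
      ≤ ℓ * (2 / r * ∑ g ∈ F, z g * ∑ p ∈ (ed g).offDiag, (x p.1 - x p.2) ^ 2) := by
  set E : α → ℝ := fun g => z g * ∑ p ∈ (ed g).offDiag, (x p.1 - x p.2) ^ 2
  have hE : ∀ g ∈ F, 0 ≤ E g := fun g hg =>
    mul_nonneg (hz g hg).le (sum_nonneg fun p _ => sq_nonneg _)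
  have hspanner (j : ι) : (x u - x v) ^ 2 ≤ ℓ * (2 / r * ∑ g ∈ Sj j, E g) := by
    obtain ⟨L, hLS, hp, hlen⟩ := hpaths j
    refine (sq_sub_le_of_isHyperpath_subset hr (fun g hg => hF g (hSjF j hg))
      (fun g hg => hz g (hSjF j hg)) x hp hLS).trans ?_
    exact mul_le_mul_of_nonneg_right hlen
      (mul_nonneg (by positivity) (sum_nonneg fun g hg => hE g (hSjF j hg)))
  calc Fintype.card ι * (x u - x v) ^ 2 = ∑ _j : ι, (x u - x v) ^ 2 := by simp
    _ ≤ ∑ j, ℓ * (2 / r * ∑ g ∈ Sj j, E g) := sum_le_sum fun j _ => hspanner j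
    _ = ℓ * (2 / r * ∑ j, ∑ g ∈ Sj j, E g) := by rw [← mul_sum, ← mul_sum]
    _ ≤ ℓ * (2 / r * ∑ g ∈ F, E g) := by
      gcongr
      exact sum_sum_le_sum_of_pairwiseDisjoint (fun j _ j' _ h => hdisj h)
        (fun j _ => hSjF j) hE

end Spanner

theorem stmt13_general {V α : Type*} [DecidableEq V] [DecidableEq α]
    (n : ℕ) (hn2 : 2 ≤ n)
    (F : Finset α) (ed : α → Finset V) (z : α → ℝ) (hz : ∀ f ∈ F, 0 < z f)
    (r : ℝ) (hr : ∀ f ∈ F, r / 2 < ((ed f).card : ℝ) ∧ ((ed f).card : ℝ) ≤ r)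
    (lam : ℕ) (hlam : 0 < lam)
    (Sj : Fin lam → Finset α) (hSjF : ∀ j, Sj j ⊆ F)
    (hdisj : ∀ j j', j ≠ j' → Disjoint (Sj j) (Sj j'))
    (S : Finset α) (hS : S = Finset.univ.biUnion Sj)
    (hspan : ∀ j : Fin lam,
      ∀ f ∈ F \ ((Finset.univ.filter fun j' => j' < j).biUnion Sj),
        ∀ u ∈ ed f, ∀ v ∈ ed f, u ≠ v →
          ∃ L : List α, (∀ g ∈ L, g ∈ Sj j) ∧ IsHyperpath ed u v L ∧
            (L.map fun g => 1 / z g).sum ≤ Real.log n / z f) :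
    ∀ f ∈ F \ S, ∀ u ∈ ed f, ∀ v ∈ ed f, u ≠ v →
      z f * sSup {t : ℝ | ∃ x : V → ℝ,
          (∑ g ∈ F, (1 / 2) * ∑ p ∈ (ed g).offDiag, z g * (x p.1 - x p.2) ^ 2) = 1 ∧
          t = (x u - x v) ^ 2} ≤
        4 * Real.log n / (r * lam) := by
  intro f hf u hu v hv huv
  obtain ⟨hfF, hfS⟩ := mem_sdiff.1 hf
  have hzf := hz f hfF
  have hr0 : 0 < r := by linarith [hr f hfF]
  have hlog : 0 < Real.log n := Real.log_pos (by exact_mod_cast hn2)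
  have hlam' : (0 : ℝ) < lam := by exact_mod_cast hlam
  have hpaths (j : Fin lam) := hspan j f (mem_sdiff.2 ⟨hfF, fun h =>
    hfS (hS ▸ biUnion_subset_biUnion_of_subset_left Sj (filter_subset _ _) h)⟩) u hu v hv huv
  rw [← le_div_iff₀' hzf]
  refine Real.sSup_le ?_ (by positivity)
  rintro _ ⟨x, hx, rfl⟩
  have htotal : ∑ g ∈ F, z g * ∑ p ∈ (ed g).offDiag, (x p.1 - x p.2) ^ 2 = 2 := by
    calc ∑ g ∈ F, z g * ∑ p ∈ (ed g).offDiag, (x p.1 - x p.2) ^ 2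
        = 2 * ∑ g ∈ F, (1 / 2) * ∑ p ∈ (ed g).offDiag, z g * (x p.1 - x p.2) ^ 2 := by
          simp only [mul_sum, ← mul_assoc]; norm_num
      _ = 2 := by rw [hx, mul_one]
  have hbundle := card_mul_sq_sub_le_of_disjoint_hyperpaths hr0 (by positivity)
    (fun g hg => (hr g hg).1) hz hSjF hdisj x hpaths
  rw [htotal, Fintype.card_fin] at hbundle
  rw [div_div, le_div_iff₀ (by positivity)]
  calc (x u - x v) ^ 2 * (r * lam * z f) = lam * (x u - x v) ^ 2 * (r * z f) := by ring
    _ ≤ Real.log n / z f * (2 / r * 2) * (r * z f) := by gcongr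
    _ = 4 * Real.log n := by field_simp; ring

/-- Let `H = (V,F,z)` be an undirected hypergraph with `n = |V|` and `|f| ∈ (r/2, r]` for
every hyperedge, and let `S = S₁ ⊎ … ⊎ S_λ` be a bundle of `λ` disjoint `(log n)`-hyperspanners
(each `Sⱼ` a `(log n)`-hyperspanner of the hypergraph with hyperedge set `F ∖ (S₁∪…∪S_{j−1})`).
Then, for every `f ∈ F ∖ S` and every pair of distinct `u, v ∈ f`, the effective resistance
`R_G(u,v) = sup {(x_u − x_v)² : xᵀ L_G x = 1}` in the associated graph `G` satisfies
`z_f · R_G(u,v) ≤ 4 log n / (r λ)`. -/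
theorem stmt13 {V α : Type*} [Fintype V] [DecidableEq V] [DecidableEq α]
    (n : ℕ) (hn : n = Fintype.card V) (hn2 : 2 ≤ n)
    (F : Finset α) (ed : α → Finset V) (z : α → ℝ) (hz : ∀ f ∈ F, 0 < z f)
    (r : ℝ) (hr : ∀ f ∈ F, r / 2 < ((ed f).card : ℝ) ∧ ((ed f).card : ℝ) ≤ r)
    (lam : ℕ) (hlam : 0 < lam)
    (Sj : Fin lam → Finset α) (hSjF : ∀ j, Sj j ⊆ F)
    (hdisj : ∀ j j', j ≠ j' → Disjoint (Sj j) (Sj j'))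
    (S : Finset α) (hS : S = Finset.univ.biUnion Sj)
    (hspan : ∀ j : Fin lam,
      ∀ f ∈ F \ ((Finset.univ.filter fun j' => j' < j).biUnion Sj),
        ∀ u ∈ ed f, ∀ v ∈ ed f, u ≠ v →
          ∃ L : List α, (∀ g ∈ L, g ∈ Sj j) ∧ IsHyperpath ed u v L ∧
            (L.map fun g => 1 / z g).sum ≤ Real.log n / z f) :
    ∀ f ∈ F \ S, ∀ u ∈ ed f, ∀ v ∈ ed f, u ≠ v →
      z f * sSup {t : ℝ | ∃ x : V → ℝ,
          (∑ g ∈ F, (1 / 2) * ∑ p ∈ (ed g).offDiag, z g * (x p.1 - x p.2) ^ 2) = 1 ∧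
          t = (x u - x v) ^ 2} ≤
        4 * Real.log n / (r * lam) :=
  stmt13_general n hn2 F ed z hz r hr lam hlam Sj hSjF hdisj S hS hspan
end
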